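/- Let m ≥ 1, a_1,…,a_n ∈ ℝ^m, x ∈ ℝ_{≥0}^n, S ⊆ [n], and 0 ≤ r ≤ m. Then the coefficient of t^r in the degree-m polynomial t ↦ det(t · Σ_{i∈[n]} x_i a_i a_iᵀ + Σ_{j∈S} a_j a_jᵀ) equals Σ_{U ⊆ [n], |U| = r} Σ_{W ⊆ S, |W| = m−r} (∏_{i∈U} x_i) · det(Σ_{i∈U} a_i a_iᵀ + Σ_{j∈W} a_j a_jᵀ). -/

import Mathlib

open Matrix Finset Polynomial

/-!
Expanding the determinant multilinearly in its rows writes `det (∑ i ∈ T, c i • u i v iᵀ)` as a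
sum over all maps `f` from rows to `T`. Terms with non-injective `f` vanish (two equal rows), and
grouping the injective ones by their image gives the Cauchy–Binet form
`∑ U ∈ T.powersetCard m, (∏ i ∈ U, c i) * det (∑ i ∈ U, u i v iᵀ)`.
Over `ℝ[X]`, applied to the disjoint union of `[n]` (weights `x i • X`) and `S` (weights `1`),
the summand indexed by `U ⊔ W` is a constant times `X ^ #U`, so the coefficient of `X ^ r` collects
exactly the pairs with `#U = r` and `#W = m - r`.
-/

namespace Finset

variable {ι n M : Type*} [Fintype n] [DecidableEq ι] [AddCommMonoid M]

theorem image_univ_eq_of_injective {f : n → ι} (hf : f.Injective) {U : Finset ι}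
    (hU : #U = Fintype.card n) (hfU : ∀ k, f k ∈ U) : univ.image f = U :=
  eq_of_subset_of_card_le (by simpa [subset_iff] using hfU)
    (by rw [card_image_of_injective _ hf, card_univ, hU])

theorem sum_injective_piFinset_eq_sum_powersetCard [DecidableEq n] (T : Finset ι)
    (g : (n → ι) → M) :
    ∑ f ∈ Fintype.piFinset (fun _ : n => T) with f.Injective, g f =
      ∑ U ∈ T.powersetCard (Fintype.card n),
        ∑ f ∈ Fintype.piFinset (fun _ : n => U) with f.Injective, g f := by
  have hmaps : ∀ f ∈ {f ∈ Fintype.piFinset (fun _ : n => T) | f.Injective},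
      univ.image f ∈ T.powersetCard (Fintype.card n) := by
    intro f hf
    simp only [mem_filter, Fintype.mem_piFinset] at hf
    simpa [mem_powersetCard, subset_iff, card_image_of_injective _ hf.2] using hf.1
  rw [← sum_fiberwise_of_maps_to hmaps]
  refine sum_congr rfl fun U hU => sum_congr ?_ fun _ _ => rfl
  rw [mem_powersetCard] at hU
  ext f
  simp only [mem_filter, Fintype.mem_piFinset]
  constructor
  · rintro ⟨⟨-, hf⟩, rfl⟩
    exact ⟨fun k => mem_image_of_mem f (mem_univ k), hf⟩
  · rintro ⟨hfU, hf⟩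
    exact ⟨⟨fun k => hU.1 (hfU k), hf⟩, image_univ_eq_of_injective hf hU.2 hfU⟩

theorem sum_powersetCard_disjSum_filter_card_toLeft {α β : Type*} (A : Finset α) (B : Finset β)
    {m r : ℕ} (hr : r ≤ m) (g : Finset α → Finset β → M) :
    ∑ U ∈ (A.disjSum B).powersetCard m with #U.toLeft = r, g U.toLeft U.toRight =
      ∑ U ∈ A.powersetCard r, ∑ W ∈ B.powersetCard (m - r), g U W := by
  rw [← sum_product']
  refine sum_nbij' (fun U => (U.toLeft, U.toRight)) (fun p => p.1.disjSum p.2) ?_ ?_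
    (fun U _ => toLeft_disjSum_toRight) (fun p _ => by simp) (fun _ _ => rfl)
  · intro U hU
    simp only [mem_filter, mem_powersetCard, subset_disjSum] at hU
    obtain ⟨⟨⟨hA, hB⟩, hm⟩, hr⟩ := hU
    have := card_toLeft_add_card_toRight (u := U)
    simp only [mem_product, mem_powersetCard]
    exact ⟨⟨hA, hr⟩, hB, by omega⟩
  · rintro ⟨U, W⟩ hUW
    simp only [mem_product, mem_powersetCard] at hUW
    obtain ⟨⟨hA, hU⟩, hB, hW⟩ := hUW
    simp only [mem_filter, mem_powersetCard, toLeft_disjSum, card_disjSum]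
    exact ⟨⟨disjSum_mono hA hB, by omega⟩, hU⟩

end Finset

namespace Matrix

variable {R ι n : Type*} [CommRing R] [Fintype n] [DecidableEq n]

theorem det_sum_smul_vecMulVec_eq_sum_piFinset (u v : ι → n → R) (c : ι → R) (T : Finset ι) :
    (∑ i ∈ T, c i • vecMulVec (u i) (v i)).det =
      ∑ f ∈ Fintype.piFinset fun _ : n => T,
        (∏ k, c (f k)) * ((∏ k, u (f k) k) * (of fun k => v (f k)).det) := by
  have hrows : ∑ i ∈ T, c i • vecMulVec (u i) (v i) = of fun k => ∑ i ∈ T, (c i * u i k) • v i := by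
    ext k l
    simp only [sum_apply, smul_apply, vecMulVec_apply, of_apply, Finset.sum_apply, Pi.smul_apply,
      smul_eq_mul, mul_assoc]
  rw [hrows]
  refine (detRowAlternating.toMultilinearMap.map_sum_finset
    (fun k i => (c i * u i k) • v i) fun _ => T).trans (sum_congr rfl fun f _ => ?_)
  have hscale := (detRowAlternating : (n → R) [⋀^n]→ₗ[R] R).map_smul_univ
    (fun k => c (f k) * u (f k) k) fun k => v (f k)
  simp only [AlternatingMap.coe_multilinearMap, Finset.prod_mul_distrib] at hscale ⊢
  rw [hscale, smul_eq_mul, mul_assoc]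
  rfl

theorem det_of_comp_eq_zero_of_not_injective (v : ι → n → R) {f : n → ι} (hf : ¬ f.Injective) :
    (of fun k => v (f k)).det = 0 := by
  obtain ⟨k, l, hkl, hne⟩ := Function.not_injective_iff.mp hf
  exact det_zero_of_row_eq hne (congrArg v hkl)

theorem det_sum_smul_vecMulVec_eq_sum_injective [DecidableEq ι] (u v : ι → n → R) (c : ι → R)
    (T : Finset ι) :
    (∑ i ∈ T, c i • vecMulVec (u i) (v i)).det =
      ∑ f ∈ Fintype.piFinset (fun _ : n => T) with f.Injective,
        (∏ k, c (f k)) * ((∏ k, u (f k) k) * (of fun k => v (f k)).det) := by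
  rw [det_sum_smul_vecMulVec_eq_sum_piFinset, sum_filter_of_ne]
  intro f _ hne
  by_contra hf
  simp [det_of_comp_eq_zero_of_not_injective v hf] at hne

theorem det_sum_smul_vecMulVec [DecidableEq ι] (u v : ι → n → R) (c : ι → R) (T : Finset ι) :
    (∑ i ∈ T, c i • vecMulVec (u i) (v i)).det =
      ∑ U ∈ T.powersetCard (Fintype.card n),
        (∏ i ∈ U, c i) * (∑ i ∈ U, vecMulVec (u i) (v i)).det := by
  rw [det_sum_smul_vecMulVec_eq_sum_injective, sum_injective_piFinset_eq_sum_powersetCard]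
  refine sum_congr rfl fun U hU => ?_
  rw [mem_powersetCard] at hU
  have hU1 : ∑ i ∈ U, vecMulVec (u i) (v i) = ∑ i ∈ U, (1 : R) • vecMulVec (u i) (v i) := by
    simp only [one_smul]
  rw [hU1, det_sum_smul_vecMulVec_eq_sum_injective, mul_sum]
  refine sum_congr rfl fun f hf => ?_
  simp only [mem_filter, Fintype.mem_piFinset] at hf
  rw [← image_univ_eq_of_injective hf.2 hU.2 hf.1, prod_image fun _ _ _ _ h => hf.2 h]
  simp only [prod_const_one, one_mul]

theorem det_sum_smul_vecMulVec_add_sum_smul_vecMulVec [DecidableEq ι] {κ : Type*} [DecidableEq κ]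
    (u v : ι → n → R) (u' v' : κ → n → R) (c : ι → R) (d : κ → R) (A : Finset ι)
    (B : Finset κ) :
    (∑ i ∈ A, c i • vecMulVec (u i) (v i) + ∑ j ∈ B, d j • vecMulVec (u' j) (v' j)).det =
      ∑ U ∈ (A.disjSum B).powersetCard (Fintype.card n),
        ((∏ i ∈ U.toLeft, c i) * ∏ j ∈ U.toRight, d j) *
          (∑ i ∈ U.toLeft, vecMulVec (u i) (v i) +
            ∑ j ∈ U.toRight, vecMulVec (u' j) (v' j)).det := by
  have h := det_sum_smul_vecMulVec (Sum.elim u u') (Sum.elim v v') (Sum.elim c d) (A.disjSum B)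
  simp only [sum_disjSum, Sum.elim_inl, Sum.elim_inr] at h
  rw [h]
  refine sum_congr rfl fun U _ => ?_
  conv_lhs => rw [← toLeft_disjSum_toRight (u := U), prod_disjSum, sum_disjSum]
  rfl

theorem coeff_prod_C_mul_X_mul_det_map_C (x : ι → R) (U : Finset ι) (M : Matrix n n R) (r : ℕ) :
    ((∏ i ∈ U, C (x i) * X) * (M.map (C : R →+* R[X])).det).coeff r =
      if #U = r then (∏ i ∈ U, x i) * M.det else 0 := by
  rw [← RingHom.mapMatrix_apply, ← RingHom.map_det, prod_mul_distrib, prod_const, ← map_prod,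
    mul_right_comm, ← C_mul, coeff_C_mul_X_pow]
  simp only [eq_comm]

theorem coeff_det_X_smul_map_add_map [DecidableEq ι] (u v : ι → n → R) (x : ι → R)
    (A B : Finset ι) {r : ℕ} (hr : r ≤ Fintype.card n) :
    ((X : R[X]) • (∑ i ∈ A, x i • vecMulVec (u i) (v i)).map (C : R →+* R[X]) +
        (∑ j ∈ B, vecMulVec (u j) (v j)).map (C : R →+* R[X])).det.coeff r =
      ∑ U ∈ A.powersetCard r, ∑ W ∈ B.powersetCard (Fintype.card n - r),
        (∏ i ∈ U, x i) * (∑ i ∈ U, vecMulVec (u i) (v i) + ∑ j ∈ W, vecMulVec (u j) (v j)).det := by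
  have hmap : ∀ (U W : Finset ι),
      ∑ i ∈ U, vecMulVec (C ∘ u i) (C ∘ v i) + ∑ j ∈ W, vecMulVec (C ∘ u j) (C ∘ v j) =
        (∑ i ∈ U, vecMulVec (u i) (v i) + ∑ j ∈ W, vecMulVec (u j) (v j)).map (C : R →+* R[X]) := by
    intro U W
    refine Matrix.ext fun k l => ?_
    simp [Matrix.sum_apply, vecMulVec_apply]
  have hmat : (X : R[X]) • (∑ i ∈ A, x i • vecMulVec (u i) (v i)).map (C : R →+* R[X]) +
        (∑ j ∈ B, vecMulVec (u j) (v j)).map (C : R →+* R[X]) =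
      ∑ i ∈ A, (C (x i) * X) • vecMulVec (C ∘ u i) (C ∘ v i) +
        ∑ j ∈ B, (1 : R[X]) • vecMulVec (C ∘ u j) (C ∘ v j) := by
    refine Matrix.ext fun k l => ?_
    simp only [Matrix.add_apply, Matrix.smul_apply, Matrix.map_apply, Matrix.sum_apply,
      vecMulVec_apply, Function.comp_apply, smul_eq_mul, one_mul, map_sum, map_mul, mul_sum]
    congr 1
    exact sum_congr rfl fun i _ => by ring
  rw [hmat, det_sum_smul_vecMulVec_add_sum_smul_vecMulVec, finsetSum_coeff]
  simp only [prod_const_one, mul_one, hmap, coeff_prod_C_mul_X_mul_det_map_C]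
  rw [← sum_filter]
  exact sum_powersetCard_disjSum_filter_card_toLeft _ _ hr fun U W =>
    (∏ i ∈ U, x i) * (∑ i ∈ U, vecMulVec (u i) (v i) + ∑ j ∈ W, vecMulVec (u j) (v j)).det

end Matrix

theorem stmt15_general (m n : ℕ) (a : Fin n → Fin m → ℝ) (x : Fin n → ℝ)
    (S : Finset (Fin n)) (r : ℕ) (hr : r ≤ m) :
    ((Polynomial.X : Polynomial ℝ)
          • (∑ i, x i • vecMulVec (a i) (a i)).map (Polynomial.C : ℝ →+* Polynomial ℝ)
        + (∑ j ∈ S, vecMulVec (a j) (a j)).map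
            (Polynomial.C : ℝ →+* Polynomial ℝ)).det.coeff r
      = ∑ U ∈ Finset.univ.powersetCard r, ∑ W ∈ S.powersetCard (m - r),
          (∏ i ∈ U, x i)
            * (∑ i ∈ U, vecMulVec (a i) (a i) + ∑ j ∈ W, vecMulVec (a j) (a j)).det := by
  have h := coeff_det_X_smul_map_add_map a a x univ S (r := r) (by rwa [Fintype.card_fin])
  rwa [Fintype.card_fin] at h

/-- Cauchy–Binet expansion of `det(t·∑_i x_i a_i a_iᵀ + ∑_{j∈S} a_j a_jᵀ)`: the
coefficient of `t^r` equals the stated sum over pairs of subsets `U ⊆ [n]`, `W ⊆ S`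
with `|U| = r` and `|W| = m - r`. -/
theorem stmt15 (m n : ℕ) (hm : 1 ≤ m) (a : Fin n → Fin m → ℝ) (x : Fin n → ℝ)
    (hx : ∀ i, 0 ≤ x i) (S : Finset (Fin n)) (r : ℕ) (hr : r ≤ m) :
    ((Polynomial.X : Polynomial ℝ)
          • (∑ i, x i • vecMulVec (a i) (a i)).map (Polynomial.C : ℝ →+* Polynomial ℝ)
        + (∑ j ∈ S, vecMulVec (a j) (a j)).map
            (Polynomial.C : ℝ →+* Polynomial ℝ)).det.coeff r
      = ∑ U ∈ Finset.univ.powersetCard r, ∑ W ∈ S.powersetCard (m - r),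
          (∏ i ∈ U, x i)
            * (∑ i ∈ U, vecMulVec (a i) (a i) + ∑ j ∈ W, vecMulVec (a j) (a j)).det :=
  stmt15_general m n a x S r hr
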